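/- A connected graph G of order n has partition dimension n if and only if G is the complete graph K_n. -/

import Mathlib

/-!
If `G` is not complete, a connected `G` contains an induced path `x - a - b`. Merging `x` and `a`
into one part and keeping every other vertex as a singleton gives a resolving partition with
`n - 1` parts: any vertex in a singleton part is the only one at distance `0` from it, and the
part `{b}` separates `x` from `a`. Conversely, in `K_n` every vertex is at distance `1` from every
part not containing it, so two vertices in a common part are never separated, and a resolving
partition of `K_n` must consist of singletons.
-/

open SimpleGraph Finset

variable {V : Type*}

/-- A vertex `x` resolves the pair `u, v` if it is at different distances from them. -/
def IsResolvingSet (G : SimpleGraph V) (S : Set V) : Prop :=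
  ∀ u v : V, u ≠ v → ∃ x ∈ S, G.dist u x ≠ G.dist v x

/-- The metric dimension: minimum cardinality of a resolving set. -/
noncomputable def metricDim (G : SimpleGraph V) [Fintype V] : ℕ :=
  sInf {n | ∃ S : Finset V, S.card = n ∧ IsResolvingSet G ↑S}

/-- `w` strongly resolves `u, v`. -/
def StronglyResolves (G : SimpleGraph V) (w u v : V) : Prop :=
  G.dist w u = G.dist w v + G.dist v u ∨ G.dist w v = G.dist w u + G.dist u v

def IsStrongResolvingSet (G : SimpleGraph V) (S : Set V) : Prop :=
  ∀ u v : V, u ≠ v → ∃ w ∈ S, StronglyResolves G w u v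

noncomputable def strongMetricDim (G : SimpleGraph V) [Fintype V] : ℕ :=
  sInf {n | ∃ S : Finset V, S.card = n ∧ IsStrongResolvingSet G ↑S}

/-- `u` is maximally distant from `v`. -/
def MaxDistant (G : SimpleGraph V) (u v : V) : Prop :=
  ∀ w : V, G.Adj u w → G.dist v w ≤ G.dist v u

def MutuallyMaxDistant (G : SimpleGraph V) (u v : V) : Prop :=
  MaxDistant G u v ∧ MaxDistant G v u

/-- The strong resolving graph of `G`. -/
def strongResolvingGraph (G : SimpleGraph V) : SimpleGraph V where
  Adj u v := u ≠ v ∧ MutuallyMaxDistant G u v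
  symm := by
    constructor
    intro u v h
    exact ⟨h.1.symm, h.2.2, h.2.1⟩
  loopless := by
    constructor
    intro u h
    exact h.1 rfl

def IsVertexCover (H : SimpleGraph V) (S : Set V) : Prop :=
  ∀ u v : V, H.Adj u v → u ∈ S ∨ v ∈ S

noncomputable def vertexCoverNum (H : SimpleGraph V) [Fintype V] : ℕ :=
  sInf {n | ∃ S : Finset V, S.card = n ∧ _root_.IsVertexCover H ↑S}

def IsLocalResolvingSet (G : SimpleGraph V) (S : Set V) : Prop :=
  ∀ u v : V, G.Adj u v → ∃ x ∈ S, G.dist u x ≠ G.dist v x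

noncomputable def localMetricDim (G : SimpleGraph V) [Fintype V] : ℕ :=
  sInf {n | ∃ S : Finset V, S.card = n ∧ IsLocalResolvingSet G ↑S}

def IsIndepVertexSet (G : SimpleGraph V) (S : Set V) : Prop :=
  S.Pairwise fun u v => ¬ G.Adj u v

noncomputable def indepNum (G : SimpleGraph V) [Fintype V] : ℕ :=
  sSup {n | ∃ S : Finset V, S.card = n ∧ IsIndepVertexSet G ↑S}

def IsAdjResolvingSet (G : SimpleGraph V) (S : Set V) : Prop :=
  ∀ x y : V, x ≠ y → x ∉ S → y ∉ S →
    ∃ s ∈ S, (G.Adj s x ∧ ¬ G.Adj s y) ∨ (¬ G.Adj s x ∧ G.Adj s y)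

noncomputable def adjDim (G : SimpleGraph V) [Fintype V] : ℕ :=
  sInf {n | ∃ S : Finset V, S.card = n ∧ IsAdjResolvingSet G ↑S}

def IsKResolvingSet (G : SimpleGraph V) (k : ℕ) (S : Finset V) : Prop :=
  ∀ x y : V, x ≠ y → k ≤ (S.filter fun w => G.dist x w ≠ G.dist y w).card

noncomputable def kMetricDim (G : SimpleGraph V) [Fintype V] (k : ℕ) : ℕ :=
  sInf {n | ∃ S : Finset V, S.card = n ∧ IsKResolvingSet G k S}

def IsKMetricDimensional (G : SimpleGraph V) (k : ℕ) : Prop :=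
  (∃ S : Finset V, IsKResolvingSet G k S) ∧
    ∀ j : ℕ, (∃ S : Finset V, IsKResolvingSet G j S) → j ≤ k

/-- distance from a vertex to a finite set of vertices -/
noncomputable def fsetDist (G : SimpleGraph V) (v : V) (P : Finset V) : ℕ :=
  sInf {d | ∃ w ∈ P, G.dist v w = d}

def IsResolvingPartition [Fintype V] [DecidableEq V] (G : SimpleGraph V)
    (Pt : Finpartition (Finset.univ : Finset V)) : Prop :=
  ∀ u v : V, u ≠ v → ∃ P ∈ Pt.parts, fsetDist G u P ≠ fsetDist G v P

noncomputable def partitionDim (G : SimpleGraph V) [Fintype V] [DecidableEq V] : ℕ :=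
  sInf {n | ∃ Pt : Finpartition (Finset.univ : Finset V), Pt.parts.card = n ∧ IsResolvingPartition G Pt}

def SetStronglyResolves (G : SimpleGraph V) (W : Finset V) (x y : V) : Prop :=
  x ∉ W ∧ y ∉ W ∧
    (fsetDist G x W = G.dist x y + fsetDist G y W ∨
      fsetDist G y W = G.dist y x + fsetDist G x W)

def IsStrongResolvingPartition [Fintype V] [DecidableEq V] (G : SimpleGraph V)
    (Pt : Finpartition (Finset.univ : Finset V)) : Prop :=
  ∀ Q ∈ Pt.parts, ∀ x ∈ Q, ∀ y ∈ Q, x ≠ y →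
    ∃ P ∈ Pt.parts, SetStronglyResolves G P x y

noncomputable def strongPartitionDim (G : SimpleGraph V) [Fintype V] [DecidableEq V] : ℕ :=
  sInf {n | ∃ Pt : Finpartition (Finset.univ : Finset V),
    Pt.parts.card = n ∧ IsStrongResolvingPartition G Pt}

/-- distance from an edge (as an unordered pair) to a vertex -/
noncomputable def edgeDist (G : SimpleGraph V) (e : Sym2 V) (v : V) : ℕ :=
  Sym2.lift ⟨fun a b => min (G.dist a v) (G.dist b v), fun a b => min_comm _ _⟩ e

def IsEdgeResolvingSet (G : SimpleGraph V) (S : Set V) : Prop :=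
  ∀ e ∈ G.edgeSet, ∀ f ∈ G.edgeSet, e ≠ f → ∃ x ∈ S, edgeDist G e x ≠ edgeDist G f x

noncomputable def edgeMetricDim (G : SimpleGraph V) [Fintype V] : ℕ :=
  sInf {n | ∃ S : Finset V, S.card = n ∧ IsEdgeResolvingSet G ↑S}

noncomputable def Rset (G : SimpleGraph V) [Fintype V] (x y : V) : Finset V :=
  Finset.univ.filter fun w => G.dist x w ≠ G.dist y w

def IsResolvingFunction (G : SimpleGraph V) [Fintype V] (f : V → ℝ) : Prop :=
  (∀ v : V, 0 ≤ f v ∧ f v ≤ 1) ∧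
    ∀ x y : V, x ≠ y → 1 ≤ ∑ w ∈ Rset G x y, f w

noncomputable def fracMetricDim (G : SimpleGraph V) [Fintype V] : ℝ :=
  sInf {t : ℝ | ∃ f : V → ℝ, IsResolvingFunction G f ∧ t = ∑ v, f v}

def AreTwins (G : SimpleGraph V) (u v : V) : Prop :=
  u ≠ v ∧ (G.neighborSet u = G.neighborSet v ∨
    insert u (G.neighborSet u) = insert v (G.neighborSet v))

noncomputable def graphDiam (G : SimpleGraph V) : ℕ :=
  sSup (Set.range fun p : V × V => G.dist p.1 p.2)

section fsetDist

variable (G : SimpleGraph V)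

lemma fsetDist_singleton (x y : V) : fsetDist G x {y} = G.dist x y := by
  have h : {d | ∃ w ∈ ({y} : Finset V), G.dist x w = d} = {G.dist x y} := by
    ext d
    simp [eq_comm]
  rw [fsetDist, h, csInf_singleton]

variable {G}

lemma fsetDist_eq_zero_of_mem {x : V} {P : Finset V} (hx : x ∈ P) : fsetDist G x P = 0 :=
  Nat.sInf_eq_zero.mpr (Or.inl ⟨x, hx, dist_self⟩)

lemma fsetDist_top_of_notMem {x : V} {P : Finset V} (hP : P.Nonempty) (hx : x ∉ P) :
    fsetDist (⊤ : SimpleGraph V) x P = 1 := by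
  have hne : ∀ w ∈ P, x ≠ w := fun w hw h => hx (h ▸ hw)
  have h : {d | ∃ w ∈ P, (⊤ : SimpleGraph V).dist x w = d} = {1} := by
    ext d
    constructor
    · rintro ⟨w, hw, rfl⟩
      exact dist_top_of_ne (hne w hw)
    · rintro rfl
      obtain ⟨w, hw⟩ := hP
      exact ⟨w, hw, dist_top_of_ne (hne w hw)⟩
  rw [fsetDist, h, csInf_singleton]

end fsetDist

theorem SimpleGraph.Preconnected.exists_induced_path_of_ne_top {G : SimpleGraph V}
    (hG : G.Preconnected) (h : G ≠ ⊤) :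
    ∃ x a b : V, G.Adj x a ∧ G.Adj a b ∧ ¬G.Adj x b ∧ x ≠ b := by
  obtain ⟨u, v, huv, hnadj⟩ : ∃ u v : V, u ≠ v ∧ ¬G.Adj u v := by
    by_contra! hall
    exact h (SimpleGraph.ext (funext₂ fun u v => propext ⟨Adj.ne, hall u v⟩))
  obtain ⟨p, hp⟩ := (hG u v).exists_walk_length_eq_dist
  exact p.exists_adj_adj_not_adj_ne hp ((hG u v).one_lt_dist_of_ne_of_not_adj huv hnadj)

section partitionDim

variable [Fintype V] [DecidableEq V] {G : SimpleGraph V} {Pt : Finpartition (univ : Finset V)}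

lemma partitionDim_le_card_parts (hPt : IsResolvingPartition G Pt) :
    partitionDim G ≤ Pt.parts.card :=
  Nat.sInf_le ⟨Pt, rfl, hPt⟩

lemma exists_fsetDist_ne_of_singleton_mem_parts {u v : V} (hr : G.Reachable u v)
    (hu : {u} ∈ Pt.parts) (huv : u ≠ v) : ∃ P ∈ Pt.parts, fsetDist G u P ≠ fsetDist G v P := by
  refine ⟨{u}, hu, ?_⟩
  rw [fsetDist_singleton, fsetDist_singleton, dist_self, dist_comm]
  exact (hr.pos_dist_of_ne huv).ne

lemma isResolvingPartition_bot (hG : G.Preconnected) :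
    IsResolvingPartition G (⊥ : Finpartition (univ : Finset V)) := fun u v huv =>
  exists_fsetDist_ne_of_singleton_mem_parts (hG u v)
    (Finpartition.mem_bot_iff.mpr ⟨u, mem_univ u, rfl⟩) huv

lemma fsetDist_top_eq_of_mem_parts {P Q : Finset V} (hP : P ∈ Pt.parts) (hQ : Q ∈ Pt.parts)
    {x y : V} (hx : x ∈ P) (hy : y ∈ P) :
    fsetDist (⊤ : SimpleGraph V) x Q = fsetDist (⊤ : SimpleGraph V) y Q := by
  by_cases hQP : Q = P
  · subst hQP
    rw [fsetDist_eq_zero_of_mem hx, fsetDist_eq_zero_of_mem hy]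
  · have hxQ : x ∉ Q := fun hxQ => hQP (Pt.eq_of_mem_parts hQ hP hxQ hx)
    have hyQ : y ∉ Q := fun hyQ => hQP (Pt.eq_of_mem_parts hQ hP hyQ hy)
    rw [fsetDist_top_of_notMem (Pt.nonempty_of_mem_parts hQ) hxQ,
      fsetDist_top_of_notMem (Pt.nonempty_of_mem_parts hQ) hyQ]

lemma IsResolvingPartition.card_parts_of_top (hPt : IsResolvingPartition ⊤ Pt) :
    Pt.parts.card = Fintype.card V := by
  have hsub : ∀ P ∈ Pt.parts, P.card ≤ 1 := fun P hP =>
    card_le_one.mpr fun x hx y hy => by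
      by_contra hxy
      obtain ⟨Q, hQ, hne⟩ := hPt x y hxy
      exact hne (fsetDist_top_eq_of_mem_parts hP hQ hx hy)
  refine le_antisymm (card_univ (α := V) ▸ Pt.card_parts_le_card) ?_
  calc Fintype.card V = ∑ P ∈ Pt.parts, P.card := by rw [Pt.sum_card_parts, card_univ]
    _ ≤ ∑ _P ∈ Pt.parts, 1 := sum_le_sum hsub
    _ = Pt.parts.card := by rw [sum_const, smul_eq_mul, mul_one]

lemma partitionDim_top : partitionDim (⊤ : SimpleGraph V) = Fintype.card V := by
  have hbot := isResolvingPartition_bot (G := ⊤) (V := V) preconnected_top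
  refine le_antisymm ?_ (le_csInf ⟨_, ⊥, rfl, hbot⟩ ?_)
  · simpa [Finpartition.card_bot] using partitionDim_le_card_parts hbot
  · rintro m ⟨Pt, rfl, hPt⟩
    exact hPt.card_parts_of_top.ge

def pairPartition (x a : V) : Finpartition (univ : Finset V) :=
  (⊥ : Finpartition (univ \ {x, a})).extend (b := {x, a}) (insert_nonempty x {a}).ne_empty
    disjoint_sdiff_self_left (sdiff_sup_cancel (subset_univ _))

lemma card_parts_pairPartition_lt {x a : V} (hxa : x ≠ a) :
    (pairPartition x a).parts.card < Fintype.card V := by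
  have htwo : 2 ≤ Fintype.card V := card_pair hxa ▸ card_le_univ {x, a}
  rw [pairPartition, Finpartition.card_extend, Finpartition.card_bot,
    card_sdiff_of_subset (subset_univ _), card_univ, card_pair hxa]
  omega

lemma singleton_mem_parts_pairPartition {x a u : V} (hux : u ≠ x) (hua : u ≠ a) :
    {u} ∈ (pairPartition x a).parts := by
  rw [pairPartition, Finpartition.extend_parts]
  exact mem_insert_of_mem (Finpartition.mem_bot_iff.mpr ⟨u, by simp [hux, hua], rfl⟩)

lemma isResolvingPartition_pairPartition (hG : G.Preconnected) {x a b : V} (hab : G.Adj a b)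
    (hxb : ¬G.Adj x b) (hbx : b ≠ x) : IsResolvingPartition G (pairPartition x a) := by
  have hb : {b} ∈ (pairPartition x a).parts :=
    singleton_mem_parts_pairPartition hbx hab.ne.symm
  have hsep : fsetDist G x {b} ≠ fsetDist G a {b} := by
    rw [fsetDist_singleton, fsetDist_singleton, dist_eq_one_iff_adj.mpr hab]
    exact mt dist_eq_one_iff_adj.mp hxb
  intro u v huv
  by_cases hu : u ≠ x ∧ u ≠ a
  · exact exists_fsetDist_ne_of_singleton_mem_parts (hG u v)
      (singleton_mem_parts_pairPartition hu.1 hu.2) huv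
  by_cases hv : v ≠ x ∧ v ≠ a
  · obtain ⟨P, hP, hne⟩ := exists_fsetDist_ne_of_singleton_mem_parts (hG v u)
      (singleton_mem_parts_pairPartition hv.1 hv.2) huv.symm
    exact ⟨P, hP, hne.symm⟩
  refine ⟨{b}, hb, ?_⟩
  have huv' : u = x ∧ v = a ∨ u = a ∧ v = x := by grind
  rcases huv' with ⟨rfl, rfl⟩ | ⟨rfl, rfl⟩
  exacts [hsep, hsep.symm]

lemma partitionDim_lt_card_of_ne_top (hG : G.Preconnected) (h : G ≠ ⊤) :
    partitionDim G < Fintype.card V := by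
  obtain ⟨x, a, b, hxa, hab, hxb, hne⟩ := hG.exists_induced_path_of_ne_top h
  calc partitionDim G ≤ (pairPartition x a).parts.card :=
        partitionDim_le_card_parts (isResolvingPartition_pairPartition hG hab hxb hne.symm)
    _ < Fintype.card V := card_parts_pairPartition_lt hxa.ne

end partitionDim

theorem stmt15 [Fintype V] [DecidableEq V] (G : SimpleGraph V) (hG : G.Connected) :
    partitionDim G = Fintype.card V ↔ G = ⊤ := by
  refine ⟨fun h => ?_, fun h => h ▸ partitionDim_top⟩
  by_contra hne
  exact (partitionDim_lt_card_of_ne_top hG.preconnected hne).ne h
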